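/- For p > 0 real, 1/p - 1/(e^p - 1) = ∑_{k=1}^∞ e^{-p/2^k} / (2^k (e^{-p/2^k} + 1)), with the series converging. -/

import Mathlib

/-!
Put `a k = 1 / (2 ^ k (e^(p / 2 ^ k) - 1))`. The identity
`e^(-x) / (e^(-x) + 1) = 1 / (e^x - 1) - 2 / (e^(2x) - 1)` at `x = p / 2 ^ (k + 1)` makes the
`k`-th term equal to `a (k + 1) - a k`, so the series telescopes to `lim a - a 0`, and
`a k → 1 / p` because `exp' 0 = 1`.
-/

open Filter Topology Real

theorem hasSum_succ_sub_of_tendsto {f : ℕ → ℝ} (hf : ∀ n, f n ≤ f (n + 1)) {l : ℝ}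
    (h : Tendsto f atTop (𝓝 l)) : HasSum (fun n => f (n + 1) - f n) (l - f 0) := by
  rw [hasSum_iff_tendsto_nat_of_nonneg fun n => sub_nonneg.2 (hf n)]
  simpa only [Finset.sum_range_sub] using h.sub_const (f 0)

theorem tendsto_div_two_pow_nhdsNE_zero {p : ℝ} (hp : p ≠ 0) :
    Tendsto (fun k : ℕ => p / 2 ^ k) atTop (𝓝[≠] 0) := by
  refine tendsto_nhdsWithin_iff.2 ⟨?_, .of_forall fun k => by simpa using hp⟩
  simpa [div_eq_mul_inv] using
    (tendsto_pow_atTop_nhds_zero_of_lt_one (by norm_num : (0 : ℝ) ≤ 2⁻¹) (by norm_num)).const_mul p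

theorem HasDerivAt.tendsto_two_pow_mul_sub {f : ℝ → ℝ} {f' : ℝ} (hf : HasDerivAt f f' 0)
    {p : ℝ} (hp : p ≠ 0) :
    Tendsto (fun k : ℕ => 2 ^ k * (f (p / 2 ^ k) - f 0)) atTop (𝓝 (p * f')) := by
  have hslope := (hf.tendsto_slope_zero.comp (tendsto_div_two_pow_nhdsNE_zero hp)).const_mul p
  refine hslope.congr fun k => ?_
  simp only [Function.comp_apply, zero_add, smul_eq_mul]
  field_simp

theorem exp_neg_div_exp_neg_add_one {x : ℝ} (hx : x ≠ 0) :
    exp (-x) / (exp (-x) + 1) = (exp x - 1)⁻¹ - 2 * (exp (2 * x) - 1)⁻¹ := by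
  have h1 : exp x - 1 ≠ 0 := sub_ne_zero.2 fun h => hx ((exp_eq_one_iff x).1 h)
  have h2 : exp x + 1 ≠ 0 := (add_pos (exp_pos x) one_pos).ne'
  rw [exp_neg, show exp (2 * x) - 1 = (exp x - 1) * (exp x + 1) by
    rw [show 2 * x = x + x by ring, exp_add]; ring]
  field_simp
  ring

theorem dyadic_term_eq_sub {p : ℝ} (hp : p ≠ 0) (k : ℕ) :
    exp (-p / 2 ^ (k + 1)) / (2 ^ (k + 1) * (exp (-p / 2 ^ (k + 1)) + 1)) =
      (2 ^ (k + 1) * (exp (p / 2 ^ (k + 1)) - 1))⁻¹ - (2 ^ k * (exp (p / 2 ^ k) - 1))⁻¹ := by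
  have h := exp_neg_div_exp_neg_add_one (x := p / 2 ^ (k + 1)) (by positivity)
  rw [← neg_div, show 2 * (p / 2 ^ (k + 1)) = p / 2 ^ k by rw [pow_succ]; field_simp] at h
  rw [mul_comm, ← div_div, h, pow_succ]
  field_simp

theorem dyadic_real_identity (p : ℝ) (hp : 0 < p) :
    HasSum
      (fun k : ℕ =>
        Real.exp (-p / 2 ^ (k + 1)) / (2 ^ (k + 1) * (Real.exp (-p / 2 ^ (k + 1)) + 1)))
      (1 / p - 1 / (Real.exp p - 1)) := by
  set a : ℕ → ℝ := fun k => (2 ^ k * (exp (p / 2 ^ k) - 1))⁻¹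
  have hterm : ∀ k, _ = a (k + 1) - a k := dyadic_term_eq_sub hp.ne'
  have hmono : ∀ k, a k ≤ a (k + 1) := fun k => sub_nonneg.1 <| by
    rw [← hterm]; positivity
  have hlim : Tendsto a atTop (𝓝 p⁻¹) := by
    simpa [a] using ((hasDerivAt_exp 0).tendsto_two_pow_mul_sub hp.ne').inv₀ (by simpa using hp.ne')
  simp_rw [hterm]
  simpa [a, one_div] using hasSum_succ_sub_of_tendsto hmono hlim
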